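/- arXiv:1107.4501 — 2 statements merged into one kernel-verified Lean document; each statement's English description precedes it below -/
import Mathlib

section
/- Consider the Fourier system z_n′ = −(n²/2) z_n + (Kn/2)(z₁ z_{n−1} − z̄₁ z_{n+1}), z₀ ≡ 1, with |z_n(t)| ≤ 1 for all n and t. Writing z₁ = ρ₁ e^{iθ₁} and z₂ = ρ₂ e^{iθ₂}, one has ρ₁′ = −(1/2)ρ₁ + (K/2)ρ₁[1 − ρ₂ cos(θ₂ − 2θ₁)]; in particular, if ρ₂(t) ≤ δ for all t ∈ [0,T] and K(1−δ) > 1, then ρ₁(t) ≥ ρ₁(0) e^{(1/2)(K(1−δ)−1) t} for t ∈ [0,T]. -/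
/-!
Writing `z₁' = -z₁/2 + (K/2)(z₁ - z̄₁ z₂)` (the `n = 1` equation with `z₀ = 1`), one has
`ρ₁ ρ₁' = Re(z̄₁ z₁') = ρ₁² (K(1 - ρ₂ cos(θ₂ - 2θ₁)) - 1)/2`, because `Re(z̄₁² z₂) = ρ₁² ρ₂ cos(θ₂ - 2θ₁)`.
Dividing by `ρ₁` gives the equation for `ρ₁'` (where `ρ₁ = 0` it is a minimum, so `ρ₁' = 0`).
For `K ≥ 0` and `ρ₂ ≤ δ` the growth rate is at least `a = (K(1-δ) - 1)/2`, and the lower bound is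
Grönwall's inequality: `ρ₁(t) e^{-at}` is nondecreasing. For `K < 0` the rate is at most
`-1/2` for all times, so backwards in time `ρ₁` would grow exponentially; as `ρ₁ ≤ 1` on all of `ℝ`,
this forces `ρ₁ ≡ 0`.
-/

open Real Complex Set Filter Topology

theorem mul_exp_le_of_mul_le_deriv {f f' : ℝ → ℝ} {a t₀ t₁ t : ℝ}
    (hf : ∀ s ∈ Icc t₀ t₁, HasDerivAt f (f' s) s) (hle : ∀ s ∈ Icc t₀ t₁, a * f s ≤ f' s)
    (ht : t ∈ Icc t₀ t₁) : f t₀ * Real.exp (a * (t - t₀)) ≤ f t := by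
  set g : ℝ → ℝ := fun s => f s * Real.exp (-(a * (s - t₀)))
  have hg : ∀ s ∈ Icc t₀ t₁, HasDerivAt g ((f' s - a * f s) * Real.exp (-(a * (s - t₀)))) s := by
    intro s hs
    have he : HasDerivAt (fun s => Real.exp (-(a * (s - t₀))))
        (Real.exp (-(a * (s - t₀))) * -(a * 1)) s :=
      (((hasDerivAt_id' s).sub_const t₀).const_mul a).neg.exp
    exact ((hf s hs).mul he).congr_deriv (by ring)
  have hmono : MonotoneOn g (Icc t₀ t₁) := by
    refine monotoneOn_of_hasDerivWithinAt_nonneg (convex_Icc t₀ t₁)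
      (fun s hs => (hg s hs).continuousAt.continuousWithinAt)
      (fun s hs => (hg s (interior_subset hs)).hasDerivWithinAt) fun s hs => ?_
    have hs := interior_subset hs
    exact mul_nonneg (sub_nonneg.2 (hle s hs)) (Real.exp_pos _).le
  have h := hmono (left_mem_Icc.2 (ht.1.trans ht.2)) ht ht.1
  simp only [g, sub_self, mul_zero, neg_zero, Real.exp_zero, mul_one] at h
  calc f t₀ * Real.exp (a * (t - t₀))
      ≤ f t * Real.exp (-(a * (t - t₀))) * Real.exp (a * (t - t₀)) := by gcongr
    _ = f t := by rw [mul_assoc, ← Real.exp_add, neg_add_cancel, Real.exp_zero, mul_one]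

theorem le_mul_exp_of_deriv_le_mul {f f' : ℝ → ℝ} {a t₀ t₁ t : ℝ}
    (hf : ∀ s ∈ Icc t₀ t₁, HasDerivAt f (f' s) s) (hle : ∀ s ∈ Icc t₀ t₁, f' s ≤ a * f s)
    (ht : t ∈ Icc t₀ t₁) : f t ≤ f t₀ * Real.exp (a * (t - t₀)) := by
  have := mul_exp_le_of_mul_le_deriv (f := -f) (f' := -f') (fun s hs => (hf s hs).neg)
    (fun s hs => by simpa using hle s hs) ht
  simpa using this

theorem nonpos_of_deriv_le_mul_of_le_const {f f' : ℝ → ℝ} {b C : ℝ} (hb : b < 0)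
    (hf : ∀ s, HasDerivAt f (f' s) s) (hle : ∀ s, f' s ≤ b * f s) (hC : ∀ s, f s ≤ C) (t : ℝ) :
    f t ≤ 0 := by
  have hdecay : Tendsto (fun s => C * Real.exp (b * s)) atTop (𝓝 0) := by
    simpa using (Real.tendsto_exp_atBot.comp (tendsto_id.const_mul_atTop_of_neg hb)).const_mul C
  refine ge_of_tendsto hdecay (eventually_ge_atTop 0 |>.mono fun s hs => ?_)
  calc f t ≤ f (t - s) * Real.exp (b * (t - (t - s))) :=
        le_mul_exp_of_deriv_le_mul (fun r _ => hf r) (fun r _ => hle r) ⟨by linarith, le_rfl⟩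
    _ ≤ C * Real.exp (b * s) := by rw [sub_sub_cancel]; gcongr; exact hC _

theorem self_mul_deriv_eq_inner_of_norm {E : Type*} [NormedAddCommGroup E] [InnerProductSpace ℝ E]
    {f : ℝ → E} {f' : E} {r : ℝ → ℝ} {r' t : ℝ} (hr : ∀ s, r s = ‖f s‖)
    (hf : HasDerivAt f f' t) (hr' : HasDerivAt r r' t) : r t * r' = inner ℝ (f t) f' := by
  have hsq : HasDerivAt (fun s => r s ^ 2) (2 * inner ℝ (f t) f') t := by
    simpa only [hr] using hf.norm_sq
  have := (hr'.pow 2).unique hsq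
  norm_num at this
  linarith

theorem deriv_eq_mul_of_self_mul_deriv_eq {r : ℝ → ℝ} {r' c t : ℝ} (hr : ∀ s, 0 ≤ r s)
    (hr' : HasDerivAt r r' t) (h : r t * r' = r t ^ 2 * c) : r' = r t * c := by
  rcases (hr t).eq_or_lt with h0 | hpos
  · have hmin : IsLocalMin r t := Eventually.of_forall fun s => h0 ▸ hr s
    rw [hmin.hasDerivAt_eq_zero hr', ← h0, zero_mul]
  · exact mul_left_cancel₀ hpos.ne' (by rw [h]; ring)

theorem re_conj_sq_mul_of_polar {z w : ℂ} {r s α β : ℝ}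
    (hz : z = r * Complex.exp (α * I)) (hw : w = s * Complex.exp (β * I)) :
    ((starRingEnd ℂ) z ^ 2 * w).re = r ^ 2 * s * Real.cos (β - 2 * α) := by
  have : (starRingEnd ℂ) z ^ 2 * w = ↑(r ^ 2 * s) * Complex.exp (↑(β - 2 * α) * I) := by
    rw [hz, hw, map_mul, Complex.conj_ofReal, ← Complex.exp_conj, map_mul, Complex.conj_ofReal,
      Complex.conj_I, mul_pow, ← Complex.exp_nat_mul, mul_mul_mul_comm, ← Complex.exp_add]
    push_cast
    ring_nf
  rw [this, Complex.re_ofReal_mul, Complex.exp_ofReal_mul_I_re]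

theorem inner_first_mode_field_of_polar {z₁ z₂ : ℂ} {K ρ₁ ρ₂ θ₁ θ₂ : ℝ}
    (hpolar₁ : z₁ = ρ₁ * Complex.exp (θ₁ * I)) (hpolar₂ : z₂ = ρ₂ * Complex.exp (θ₂ * I))
    (hρ₁ : ρ₁ = ‖z₁‖) :
    inner ℝ z₁ (-(1 / 2) * z₁ + (K / 2) * (z₁ - (starRingEnd ℂ) z₁ * z₂)) =
      ρ₁ ^ 2 * ((K * (1 - ρ₂ * Real.cos (θ₂ - 2 * θ₁)) - 1) / 2) := by
  have hsplit : (-(1 / 2) * z₁ + (K / 2) * (z₁ - (starRingEnd ℂ) z₁ * z₂)) * (starRingEnd ℂ) z₁ =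
      ((ρ₁ ^ 2 * ((K - 1) / 2) : ℝ) : ℂ) - ((K / 2 : ℝ) : ℂ) * ((starRingEnd ℂ) z₁ ^ 2 * z₂) := by
    rw [Complex.ofReal_mul, hρ₁, Complex.ofReal_pow, ← Complex.mul_conj']
    push_cast
    ring
  rw [Complex.inner, hsplit, Complex.sub_re, Complex.re_ofReal_mul, Complex.ofReal_re,
    re_conj_sq_mul_of_polar hpolar₁ hpolar₂]
  ring

theorem stmt4 (K : ℝ) (z : ℕ → ℝ → ℂ) (ρ₁ ρ₂ θ₁ θ₂ : ℝ → ℝ) (ρ₁' : ℝ → ℝ)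
    (hz0 : ∀ t, z 0 t = 1)
    (hODE : ∀ n : ℕ, 1 ≤ n → ∀ t : ℝ,
      HasDerivAt (z n)
        (-((n : ℂ) ^ 2 / 2) * z n t +
          (K * n / 2) * (z 1 t * z (n - 1) t - (starRingEnd ℂ) (z 1 t) * z (n + 1) t)) t)
    (hbound : ∀ n t, ‖z n t‖ ≤ 1)
    (hpolar1 : ∀ t, z 1 t = (ρ₁ t : ℂ) * Complex.exp ((θ₁ t : ℂ) * Complex.I))
    (hpolar2 : ∀ t, z 2 t = (ρ₂ t : ℂ) * Complex.exp ((θ₂ t : ℂ) * Complex.I))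
    (hρ₁ : ∀ t, ρ₁ t = ‖z 1 t‖)
    (hρ₂ : ∀ t, ρ₂ t = ‖z 2 t‖)
    (hρ₁' : ∀ t, HasDerivAt ρ₁ (ρ₁' t) t) :
    (∀ t, ρ₁' t =
      -(1 / 2) * ρ₁ t + (K / 2) * ρ₁ t * (1 - ρ₂ t * Real.cos (θ₂ t - 2 * θ₁ t))) ∧
    ∀ δ T : ℝ, 0 < T → (∀ t ∈ Set.Icc (0:ℝ) T, ρ₂ t ≤ δ) → 1 < K * (1 - δ) →
      ∀ t ∈ Set.Icc (0:ℝ) T,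
        ρ₁ t ≥ ρ₁ 0 * Real.exp ((1 / 2) * (K * (1 - δ) - 1) * t) := by
  set c : ℝ → ℝ := fun t => ρ₂ t * Real.cos (θ₂ t - 2 * θ₁ t)
  have hz1 : ∀ t, HasDerivAt (z 1)
      (-(1 / 2) * z 1 t + (K / 2) * (z 1 t - (starRingEnd ℂ) (z 1 t) * z 2 t)) t := fun t => by
    simpa [hz0] using hODE 1 le_rfl t
  have hρ₁_nonneg : ∀ t, 0 ≤ ρ₁ t := fun t => hρ₁ t ▸ norm_nonneg _
  have hρ₁'_eq : ∀ t, ρ₁' t = ρ₁ t * ((K * (1 - c t) - 1) / 2) := fun t =>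
    deriv_eq_mul_of_self_mul_deriv_eq hρ₁_nonneg (hρ₁' t)
      ((self_mul_deriv_eq_inner_of_norm hρ₁ (hz1 t) (hρ₁' t)).trans
        (inner_first_mode_field_of_polar (hpolar1 t) (hpolar2 t) (hρ₁ t)))
  refine ⟨fun t => by rw [hρ₁'_eq t]; ring, fun δ T _ hδ hK t ht => ?_⟩
  have hc_le : ∀ s, c s ≤ ρ₂ s := fun s =>
    mul_le_of_le_one_right (hρ₂ s ▸ norm_nonneg _) (Real.cos_le_one _)
  rcases le_or_gt 0 K with hK_nonneg | hK_neg
  · have hgrowth : ∀ s ∈ Set.Icc 0 T, (K * (1 - δ) - 1) / 2 * ρ₁ s ≤ ρ₁' s := fun s hs => by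
      rw [hρ₁'_eq s, mul_comm]
      gcongr ρ₁ s * ((K * (1 - ?_) - 1) / 2)
      · exact hρ₁_nonneg s
      · exact (hc_le s).trans (hδ s hs)
    have := mul_exp_le_of_mul_le_deriv (fun s _ => hρ₁' s) hgrowth ht
    rw [sub_zero] at this
    convert this using 3
    ring
  · have hdecay : ∀ s, ρ₁' s ≤ -(1 / 2) * ρ₁ s := fun s => by
      rw [hρ₁'_eq s]
      have hKc : K * (1 - c s) ≤ 0 :=
        mul_nonpos_of_nonpos_of_nonneg hK_neg.le
          (by linarith [hc_le s, hρ₂ s ▸ hbound 2 s])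
      nlinarith [hρ₁_nonneg s]
    have h0 : ρ₁ 0 ≤ 0 := nonpos_of_deriv_le_mul_of_le_const (by norm_num) hρ₁' hdecay
      (fun s => hρ₁ s ▸ hbound 1 s) 0
    exact (mul_nonpos_of_nonpos_of_nonneg h0 (Real.exp_pos _).le).trans (hρ₁_nonneg t)
end

section
/- Define α_{n,2p} for n ≥ 2, p ≥ 0 by: α_{n,0} = ∏_{j=1}^{n−1} K/(K+j); for p ≥ 1, ((1+p)K + (1−p)) α_{2,2p} = (K/2) ∑_{i+j=p−1, i,j≥0} (2+2j) α_{2,2j} α_{2,2i} − K α_{3,2(p−1)} (with α_{1,0}=1, α_{1,2q}=0 for q≥1); and for n ≥ 3, p ≥ 1, ((n+2p)K + (n²−n−2p)) α_{n,2p} = K ∑_{i+j=p−1} (n+2j) α_{n,2j} α_{2,2i} + Kn(α_{n−1,2p} − α_{n+1,2(p−1)}). Then for every fixed n ≥ 2 and p ≥ 1, α_{n,2p} → 0 as K → +∞. -/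
open Real Filter Finset

/-- `α K n p` stands for the Taylor coefficient `α_{n,2p}` of the graph function `φ_n`. -/
theorem stmt10 (α : ℝ → ℕ → ℕ → ℝ)
    (h10 : ∀ K : ℝ, 1 < K → α K 1 0 = 1)
    (h1p : ∀ K : ℝ, 1 < K → ∀ p : ℕ, 1 ≤ p → α K 1 p = 0)
    (hn0 : ∀ K : ℝ, 1 < K → ∀ n : ℕ, 2 ≤ n →
      α K n 0 = ∏ j ∈ Finset.Icc 1 (n - 1), K / (K + (j : ℝ)))
    (h2p : ∀ K : ℝ, 1 < K → ∀ p : ℕ, 1 ≤ p →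
      ((1 + (p : ℝ)) * K + (1 - (p : ℝ))) * α K 2 p =
        (K / 2) * (∑ j ∈ Finset.range p, (2 + 2 * (j : ℝ)) * α K 2 j * α K 2 (p - 1 - j)) -
          K * α K 3 (p - 1))
    (hnp : ∀ K : ℝ, 1 < K → ∀ n : ℕ, 3 ≤ n → ∀ p : ℕ, 1 ≤ p →
      (((n : ℝ) + 2 * (p : ℝ)) * K + ((n : ℝ) ^ 2 - (n : ℝ) - 2 * (p : ℝ))) * α K n p =
        K * (∑ j ∈ Finset.range p, ((n : ℝ) + 2 * (j : ℝ)) * α K n j * α K 2 (p - 1 - j)) +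
          K * (n : ℝ) * (α K (n - 1) p - α K (n + 1) (p - 1))) :
    ∀ n : ℕ, 2 ≤ n → ∀ p : ℕ, 1 ≤ p →
      Filter.Tendsto (fun K : ℝ => α K n p) Filter.atTop (nhds 0) := by
  classical
  -- basic quotient limit
  have hq : ∀ a c : ℝ, 0 < a →
      Tendsto (fun K : ℝ => K / (a * K + c)) atTop (nhds (1 / a)) := by
    intro a c ha
    have h0 : Tendsto (fun K : ℝ => a + c / K) atTop (nhds a) := by
      have h := (tendsto_const_nhds (x := c) (f := atTop)).div_atTop (tendsto_id (α := ℝ))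
      simpa using (tendsto_const_nhds (x := a) (f := atTop)).add h
    have h1 : Tendsto (fun K : ℝ => (a + c / K)⁻¹) atTop (nhds a⁻¹) := h0.inv₀ ha.ne'
    have h2 : Tendsto (fun K : ℝ => a * K + c) atTop atTop :=
      tendsto_atTop_add_const_right _ c (tendsto_id.const_mul_atTop ha)
    rw [one_div]
    refine h1.congr' ?_
    filter_upwards [eventually_gt_atTop 0, h2.eventually_gt_atTop 0] with K hK hD
    field_simp
  have key : ∀ p n : ℕ, 1 ≤ n →
      Tendsto (fun K : ℝ => α K n p) atTop (nhds (if p = 0 then 1 else 0)) := by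
    intro p
    induction p using Nat.strong_induction_on with
    | _ p ih =>
    match p with
    | 0 =>
      intro n hn
      simp only [if_pos rfl]
      rcases eq_or_lt_of_le hn with h1 | h2
      · refine tendsto_const_nhds.congr' ?_
        filter_upwards [eventually_gt_atTop 1] with K hK
        rw [← h1]
        exact (h10 K hK).symm
      · have h2' : 2 ≤ n := h2
        have hprod : Tendsto (fun K : ℝ => ∏ j ∈ Finset.Icc 1 (n - 1), K / (K + (j : ℝ)))
            atTop (nhds 1) := by
          have h := tendsto_finset_prod (Finset.Icc 1 (n - 1))
            (f := fun (j : ℕ) (K : ℝ) => K / (K + (j : ℝ))) (a := fun _ => (1 : ℝ))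
            (fun j _ => by simpa using hq 1 (j : ℝ) one_pos)
          simpa using h
        refine hprod.congr' ?_
        filter_upwards [eventually_gt_atTop 1] with K hK
        exact (hn0 K hK n h2').symm
    | (q + 1) =>
      simp only [if_neg (Nat.succ_ne_zero q)]
      intro n hn
      induction n, hn using Nat.le_induction with
      | base =>
        refine tendsto_const_nhds.congr' ?_
        filter_upwards [eventually_gt_atTop 1] with K hK
        exact (h1p K hK (q + 1) (by omega)).symm
      | succ n hn1 ihn =>
        rcases Nat.lt_or_ge n 2 with hn2 | hn2
        · -- n = 1, target index 2
          have hn1' : n = 1 := by omega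
          subst hn1'
          -- sum limit
          have hS : Tendsto (fun K : ℝ => ∑ j ∈ Finset.range (q + 1),
              (2 + 2 * (j : ℝ)) * α K 2 j * α K 2 (q - j)) atTop
              (nhds (∑ j ∈ Finset.range (q + 1),
                (2 + 2 * (j : ℝ)) * (if j = 0 then (1:ℝ) else 0) *
                  (if q - j = 0 then (1:ℝ) else 0))) := by
            refine tendsto_finset_sum _ fun j hj => ?_
            have hj' : j < q + 1 := Finset.mem_range.mp hj
            exact (tendsto_const_nhds.mul (ih j hj' 2 (by omega))).mul
              (ih (q - j) (by omega) 2 (by omega))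
          have hSval : (∑ j ∈ Finset.range (q + 1),
              (2 + 2 * (j : ℝ)) * (if j = 0 then (1:ℝ) else 0) *
                (if q - j = 0 then (1:ℝ) else 0)) =
              2 * (if q = 0 then (1:ℝ) else 0) := by
            rw [Finset.sum_eq_single 0]
            · simp
            · intro j _ hj0; simp [hj0]
            · intro h; simp at h
          rw [hSval] at hS
          have hT := ih q (by omega) 3 (by omega)
          have hg : Tendsto (fun K : ℝ => (1/2) * (∑ j ∈ Finset.range (q + 1),
              (2 + 2 * (j : ℝ)) * α K 2 j * α K 2 (q - j)) - α K 3 q) atTop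
              (nhds 0) := by
            have h := (tendsto_const_nhds (x := (1/2 : ℝ)) (f := atTop)).mul hS |>.sub hT
            have hval : (1/2 : ℝ) * (2 * (if q = 0 then (1:ℝ) else 0)) -
                (if q = 0 then (1:ℝ) else 0) = 0 := by rcases eq_or_ne q 0 with h0 | h0 <;> simp [h0] <;> ring
            rwa [hval] at h
          have ha : (0:ℝ) < 1 + ((q + 1 : ℕ) : ℝ) := by positivity
          have hKq := (hq (1 + ((q + 1 : ℕ) : ℝ)) (1 - ((q + 1 : ℕ) : ℝ)) ha).mul hg
          rw [mul_zero] at hKq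
          refine hKq.congr' ?_
          filter_upwards [eventually_gt_atTop 1] with K hK
          have hrec := h2p K hK (q + 1) (by omega)
          simp only [Nat.add_sub_cancel] at hrec
          have hD : (0:ℝ) < (1 + ((q + 1 : ℕ) : ℝ)) * K + (1 - ((q + 1 : ℕ) : ℝ)) := by
            push_cast
            nlinarith [Nat.cast_nonneg (α := ℝ) q]
          rw [div_mul_eq_mul_div, div_eq_iff hD.ne']
          linear_combination -hrec
        · -- n + 1 ≥ 3
          have hS : Tendsto (fun K : ℝ => ∑ j ∈ Finset.range (q + 1),
              (((n + 1 : ℕ) : ℝ) + 2 * (j : ℝ)) * α K (n + 1) j * α K 2 (q - j)) atTop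
              (nhds (∑ j ∈ Finset.range (q + 1),
                (((n + 1 : ℕ) : ℝ) + 2 * (j : ℝ)) * (if j = 0 then (1:ℝ) else 0) *
                  (if q - j = 0 then (1:ℝ) else 0))) := by
            refine tendsto_finset_sum _ fun j hj => ?_
            have hj' : j < q + 1 := Finset.mem_range.mp hj
            exact (tendsto_const_nhds.mul (ih j hj' (n + 1) (by omega))).mul
              (ih (q - j) (by omega) 2 (by omega))
          have hSval : (∑ j ∈ Finset.range (q + 1),
              (((n + 1 : ℕ) : ℝ) + 2 * (j : ℝ)) * (if j = 0 then (1:ℝ) else 0) *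
                (if q - j = 0 then (1:ℝ) else 0)) =
              ((n + 1 : ℕ) : ℝ) * (if q = 0 then (1:ℝ) else 0) := by
            rw [Finset.sum_eq_single 0]
            · simp
            · intro j _ hj0; simp [hj0]
            · intro h; simp at h
          rw [hSval] at hS
          have hT1 : Tendsto (fun K : ℝ => α K n (q + 1)) atTop (nhds 0) := ihn
          have hT2 := ih q (by omega) (n + 2) (by omega)
          have hg : Tendsto (fun K : ℝ => (∑ j ∈ Finset.range (q + 1),
              (((n + 1 : ℕ) : ℝ) + 2 * (j : ℝ)) * α K (n + 1) j * α K 2 (q - j)) +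
              ((n + 1 : ℕ) : ℝ) * (α K n (q + 1) - α K (n + 2) q)) atTop (nhds 0) := by
            have h := hS.add ((tendsto_const_nhds (x := ((n + 1 : ℕ) : ℝ)) (f := atTop)).mul
              (hT1.sub hT2))
            have hval : ((n + 1 : ℕ) : ℝ) * (if q = 0 then (1:ℝ) else 0) +
                ((n + 1 : ℕ) : ℝ) * (0 - (if q = 0 then (1:ℝ) else 0)) = 0 := by
              rcases eq_or_ne q 0 with h0 | h0 <;> simp [h0] <;> ring
            rwa [hval] at h
          have ha : (0:ℝ) < ((n + 1 : ℕ) : ℝ) + 2 * ((q + 1 : ℕ) : ℝ) := by positivity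
          have hKq := (hq (((n + 1 : ℕ) : ℝ) + 2 * ((q + 1 : ℕ) : ℝ))
            (((n + 1 : ℕ) : ℝ) ^ 2 - ((n + 1 : ℕ) : ℝ) - 2 * ((q + 1 : ℕ) : ℝ)) ha).mul hg
          rw [mul_zero] at hKq
          refine hKq.congr' ?_
          filter_upwards [eventually_gt_atTop 1] with K hK
          have hrec := hnp K hK (n + 1) (by omega) (q + 1) (by omega)
          simp only [Nat.add_sub_cancel] at hrec
          have hD : (0:ℝ) < (((n + 1 : ℕ) : ℝ) + 2 * ((q + 1 : ℕ) : ℝ)) * K +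
              (((n + 1 : ℕ) : ℝ) ^ 2 - ((n + 1 : ℕ) : ℝ) - 2 * ((q + 1 : ℕ) : ℝ)) := by
            push_cast
            nlinarith [Nat.cast_nonneg (α := ℝ) q, Nat.cast_nonneg (α := ℝ) n,
              sq_nonneg ((n:ℝ) + 1)]
          rw [div_mul_eq_mul_div, div_eq_iff hD.ne']
          linear_combination -hrec
  intro n hn p hp
  have h := key p n (by omega)
  rwa [if_neg (by omega : p ≠ 0)] at h
end
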